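/- For integers m ≥ n ≥ 0, the n+1 zigzag monomials (𝖾𝗇)^a(𝗇𝖾)^{n−a}𝗇^{m−n} (0 ≤ a ≤ n) are linearly independent over ℂ(q) in the path algebra 𝒫, and their span equals 𝒫_{m,n}; that is, they form a basis of 𝒫_{m,n}. -/

import Mathlib

noncomputable section

/-- The base field `F = ℂ(q)`. -/
abbrev F : Type := RatFunc ℂ

/-- The indeterminate `q`. -/
def qq : F := RatFunc.X

/-- The `q`-integer `[j]_q = 1 + q + ⋯ + q^(j-1)`. -/
def qint (j : ℕ) : F := ∑ i ∈ Finset.range j, qq ^ i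

/-- The `q`-factorial `[j]_q! = [1]_q ⋯ [j]_q`. -/
def qfact (j : ℕ) : F := ∏ i ∈ Finset.range j, qint (i + 1)

/-- Modular relations defining the path algebra `𝒫`; the letter `true` is `𝗇`,
the letter `false` is `𝖾`. -/
inductive PathRel : FreeAlgebra F Bool → FreeAlgebra F Bool → Prop where
  | mod1 : PathRel
      ((1 + qq) • (FreeAlgebra.ι F false * FreeAlgebra.ι F true * FreeAlgebra.ι F false))
      (qq • (FreeAlgebra.ι F false * FreeAlgebra.ι F false * FreeAlgebra.ι F true) +
        FreeAlgebra.ι F true * FreeAlgebra.ι F false * FreeAlgebra.ι F false)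
  | mod2 : PathRel
      ((1 + qq) • (FreeAlgebra.ι F true * FreeAlgebra.ι F false * FreeAlgebra.ι F true))
      (qq • (FreeAlgebra.ι F false * FreeAlgebra.ι F true * FreeAlgebra.ι F true) +
        FreeAlgebra.ι F true * FreeAlgebra.ι F true * FreeAlgebra.ι F false)

/-- The path algebra `𝒫`. -/
abbrev PathAlg : Type := RingQuot PathRel

/-- The generator `𝗇` of `𝒫`. -/
def Pn : PathAlg := RingQuot.mkAlgHom F PathRel (FreeAlgebra.ι F true)

/-- The generator `𝖾` of `𝒫`. -/
def Pe : PathAlg := RingQuot.mkAlgHom F PathRel (FreeAlgebra.ι F false)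

/-- The element of `𝒫` determined by a word in `𝗇` (`true`) and `𝖾` (`false`). -/
def wordElem (w : List Bool) : PathAlg := (w.map fun b => if b then Pn else Pe).prod

/-- `𝒫_{m,n}`: the span of words with `m` letters `𝗇` and `n` letters `𝖾`. -/
def Pmn (m n : ℕ) : Submodule F PathAlg :=
  Submodule.span F {x | ∃ w : List Bool, w.count true = m ∧ w.count false = n ∧ x = wordElem w}

/-- `lam` (0-indexed list of parts) is a partition contained in the `m × n` box. -/
def IsPartitionIn (m n : ℕ) (lam : ℕ → ℕ) : Prop :=
  (∀ i j, i ≤ j → lam j ≤ lam i) ∧ (∀ i, lam i ≤ n) ∧ (∀ i, m ≤ i → lam i = 0)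

/-- `eastBefore w r` = number of east steps (`false`) preceding the `(r+1)`-st
north step (`true`) of `w`. -/
def eastBefore : List Bool → ℕ → ℕ
  | [], _ => 0
  | true :: _, 0 => 0
  | true :: w, r + 1 => eastBefore w r
  | false :: w, r => eastBefore w r + 1

/-- `northBefore w r` = number of north steps (`true`) preceding the `(r+1)`-st
east step (`false`) of `w`. -/
def northBefore : List Bool → ℕ → ℕ
  | [], _ => 0
  | false :: _, 0 => 0
  | false :: w, r + 1 => northBefore w r
  | true :: w, r => northBefore w r + 1

/-- The partition `λ(w)` of a word with `m` letters `𝗇`, as a 0-indexed function: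
row `i` (from the top) of the partition has `eastBefore w (m-1-i)` cells. -/
def wordLam (m : ℕ) (w : List Bool) : ℕ → ℕ :=
  fun i => if i < m then eastBefore w (m - 1 - i) else 0

/-- The word `w(λ)` of a partition `λ ⊆ m × n` (given as 0-indexed `lam : ℕ → ℕ`). -/
def wordOf (m n : ℕ) (lam : ℕ → ℕ) : List Bool :=
  ((List.range m).flatMap fun k =>
    List.replicate (lam (m - 1 - k) - lam (m - k)) false ++ [true]) ++
    List.replicate (n - lam 0) false

/-- The rook in column `j` of the placement `ρ` lies inside the Ferrers board of `lam`. -/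
def rookInside (m n : ℕ) (lam : ℕ → ℕ) (ρ : Fin n ↪ Fin m) (j : Fin n) : Prop :=
  (j : ℕ) < lam (ρ j)

/-- The cell in row `i` (0-indexed from the top) and column `j` (0-indexed from the left)
is unattacked for the maximal non-attacking rook placement `ρ` (with the Ferrers board of
`lam` drawn in the top-left corner of the `m × n` board). -/
def Unattacked (m n : ℕ) (lam : ℕ → ℕ) (ρ : Fin n ↪ Fin m) (i : Fin m) (j : Fin n) : Prop :=
  ρ j ≠ i ∧ ¬ ((ρ j : ℕ) < (i : ℕ)) ∧
    (if (j : ℕ) < lam i then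
      (∀ j' : Fin n, ρ j' = i → ¬ (j' < j)) ∧
      (∀ j' : Fin n, ρ j' = i → j < j' → (j' : ℕ) < lam i)
    else
      ∀ j' : Fin n, ρ j' = i → j' < j → (j' : ℕ) < lam i)

/-- `stat ρ` = number of unattacked cells. -/
def statRook (m n : ℕ) (lam : ℕ → ℕ) (ρ : Fin n ↪ Fin m) : ℕ :=
  Set.ncard {p : Fin m × Fin n | Unattacked m n lam ρ p.1 p.2}

/-- The `q`-hit number `H_k^{m,n}(λ)`. -/
def qHit (m n : ℕ) (lam : ℕ → ℕ) (k : ℕ) : F :=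
  ∑ ρ : Fin n ↪ Fin m,
    if Set.ncard {j : Fin n | rookInside m n lam ρ j} = k then qq ^ statRook m n lam ρ else 0

/-- A Dyck word of size `N`. -/
def IsDyck (N : ℕ) (w : List Bool) : Prop :=
  w.count true = N ∧ w.count false = N ∧
    ∀ p : ℕ, (w.take p).count false ≤ (w.take p).count true

/-- Adjacency of the Dyck graph `G(D)` of a Dyck word of size `N` on vertices `Fin N`
(0-indexed: vertex `a` is the vertex `a+1` of `{1,…,N}`). -/
def dyckAdj (N : ℕ) (w : List Bool) (a b : Fin N) : Prop :=
  ((a : ℕ) < b ∧ (b : ℕ) < northBefore w a) ∨ ((b : ℕ) < a ∧ (a : ℕ) < northBefore w b)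

/-- Proper colorings of the Dyck graph `G(w)` with `ν` colors. -/
def properColorings (N ν : ℕ) (w : List Bool) : Set (Fin N → Fin ν) :=
  {κ | ∀ a b : Fin N, dyckAdj N w a b → κ a ≠ κ b}

/-- Number of ascents of a coloring. -/
def ascColor (N ν : ℕ) (w : List Bool) (κ : Fin N → Fin ν) : ℕ :=
  Set.ncard {p : Fin N × Fin N | (p.1 : ℕ) < p.2 ∧ dyckAdj N w p.1 p.2 ∧ κ p.1 < κ p.2}

open scoped Classical in
/-- The chromatic quasisymmetric polynomial `X_{G(w)}(x_1,…,x_ν; q)`. -/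
def chromX (N ν : ℕ) (w : List Bool) : MvPolynomial (Fin ν) F :=
  ∑ κ : Fin N → Fin ν,
    if κ ∈ properColorings N ν w then
      MvPolynomial.C (qq ^ ascColor N ν w κ) * ∏ a : Fin N, MvPolynomial.X (κ a)
    else 0

/-- The staircase word `δ_k = 𝖾^{n-k}(𝗇𝖾)^k𝗇^{m-k}`. -/
def deltaWord (m n k : ℕ) : List Bool :=
  List.replicate (n - k) false ++ (List.replicate k [true, false]).flatten ++
    List.replicate (m - k) true

/-- `m_w`: the largest `k` with `λ(w) ⊆ λ(δ_k)`, i.e. such that the path of `δ_k`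
lies weakly below the path of `w`. -/
def mw (m n : ℕ) (w : List Bool) : ℕ :=
  Finset.sup ((Finset.range (min m n + 1)).filter fun k =>
    ∀ i ∈ Finset.range m, wordLam m w i ≤ wordLam m (deltaWord m n k) i) id

/-- The lattice paths of `w` and `d` share the unit step of `w` corresponding to
the letter at (0-indexed) position `p` of `w`. -/
def StepShared (w d : List Bool) (p : ℕ) : Prop :=
  ∃ p' : ℕ, p' < d.length ∧ d[p']? = w[p]? ∧
    (d.take p').count true = (w.take p).count true ∧
    (d.take p').count false = (w.take p).count false

/-- `w` possesses a critical factor: a factor `𝗇^i𝖾` or `𝗇𝖾^i` with `i ≥ 2`, whose run of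
repeated letters is maximal within `w`, and whose letters contain a unit step shared by
the lattice paths of `w` and of `δ_{m_w}`. -/
def HasCriticalFactor (m n : ℕ) (w : List Bool) : Prop :=
  ∃ (x y : List Bool) (i : ℕ), 2 ≤ i ∧
    ((w = x ++ (List.replicate i true ++ [false]) ++ y ∧ x.getLast? ≠ some true ∧
        ∃ p, x.length ≤ p ∧ p < x.length + i + 1 ∧ StepShared w (deltaWord m n (mw m n w)) p) ∨
      (w = x ++ ([true] ++ List.replicate i false) ++ y ∧ y.head? ≠ some false ∧
        ∃ p, x.length ≤ p ∧ p < x.length + i + 1 ∧ StepShared w (deltaWord m n (mw m n w)) p))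

/-- Evaluation of a (commutative) polynomial in two variables at the commuting elements
`s`, `t` of `𝒫`. -/
def evalST (s t : PathAlg) (P : MvPolynomial (Fin 2) F) : PathAlg :=
  ∑ d ∈ P.support, P.coeff d • (s ^ (d 0) * t ^ (d 1))

/-- The conjugate partition: `conjP m lam i = λ'_i = #{rows r : λ_r ≥ i}` (here `i ≥ 1`,
rows 0-indexed, `lam` supported on `[0, m)`). -/
def conjP (m : ℕ) (lam : ℕ → ℕ) (i : ℕ) : ℕ :=
  ((Finset.range m).filter fun r => i ≤ lam r).card

/-- The sequence `b(λ) = (b_1,…,b_n)` (1-indexed `i`) for `λ ⊆ m × n`, `m ≥ n`. -/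
def bSeq (m : ℕ) (lam : ℕ → ℕ) (i : ℕ) : ℤ :=
  if lam (m - i) < i then (m : ℤ) + 1 - i - conjP m lam i else (i : ℤ) - lam (m - i)

/-- The element `wt_i ∈ 𝒫`. -/
def wt (i : ℤ) : PathAlg :=
  if 1 ≤ i then qint i.toNat • (Pn * Pe) - (qq * qint (i - 1).toNat) • (Pe * Pn)
  else (qq ^ i) • (qint (1 - i).toNat • (Pe * Pn) - qint (-i).toNat • (Pn * Pe))

/-- The defining relations of the `q`-Klyachko algebra. -/
def klyRels : Set (MvPolynomial ℤ F) :=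
  {x | ∃ i : ℤ, x = MvPolynomial.C (1 + qq) * (MvPolynomial.X i * MvPolynomial.X i) -
    (MvPolynomial.C qq * (MvPolynomial.X i * MvPolynomial.X (i - 1)) +
      MvPolynomial.X i * MvPolynomial.X (i + 1))}

/-- The `q`-Klyachko algebra `𝒦`. -/
abbrev Kly : Type := MvPolynomial ℤ F ⧸ Ideal.span klyRels

/-- The generator `u_i` of `𝒦`. -/
def uK (i : ℤ) : Kly := Ideal.Quotient.mk (Ideal.span klyRels) (MvPolynomial.X i)

/-- The element `u(λ) = u_{a_1} ⋯ u_{a_m}` of `𝒦`, where `a(λ)` is the area sequence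
of `λ ⊆ m × m` (here `a_{i+1} = (i+1) - λ_{m-i}` with `lam` 0-indexed). -/
def uLam (m : ℕ) (lam : ℕ → ℕ) : Kly :=
  ∏ i ∈ Finset.range m, uK ((i : ℤ) + 1 - lam (m - 1 - i))

/-- The partition `λ(G(D))` of a Dyck word of size `N`, 0-indexed:
`λ_{i+1} = N - h_{i+1}(D)`. -/
def lamG (N : ℕ) (D : List Bool) : ℕ → ℕ :=
  fun i => if i < N then N - northBefore D i else 0

/-- The number of nonzero parts of `λ(G(D))`. -/
def ellG (N : ℕ) (D : List Bool) : ℕ :=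
  ((Finset.range N).filter fun i => N - northBefore D i ≠ 0).card

/-- The Dyck graph `G(D)` is abelian. -/
def IsAbelian (N : ℕ) (D : List Bool) : Prop := lamG N D 0 + ellG N D ≤ N

/-- `r` is an acyclic orientation of the graph with adjacency `adj` on `Fin N`. -/
def IsAcyclicOrientation (N : ℕ) (adj : Fin N → Fin N → Prop)
    (r : Fin N → Fin N → Bool) : Prop :=
  (∀ a b, r a b = true → adj a b) ∧
  (∀ a b, adj a b → (r a b = true ↔ ¬ r b a = true)) ∧
  (∀ a, ¬ Relation.TransGen (fun u v => r u v = true) a a)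

/-- Number of ascents of an orientation. -/
def ascOrient (N : ℕ) (r : Fin N → Fin N → Bool) : ℕ :=
  Set.ncard {p : Fin N × Fin N | r p.1 p.2 = true ∧ (p.1 : ℕ) < p.2}

/-- Remove from `S` the sources of the orientation restricted to `S`. -/
def peel (N : ℕ) (r : Fin N → Fin N → Bool) (S : Set (Fin N)) : Set (Fin N) :=
  {v ∈ S | ∃ u ∈ S, r u v = true}

/-- Number of sources of the orientation restricted to `S`. -/
def numSources (N : ℕ) (r : Fin N → Fin N → Bool) (S : Set (Fin N)) : ℕ :=
  Set.ncard {v ∈ S | ∀ u ∈ S, ¬ r u v = true}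

open scoped Classical in
/-- `initial(A)`: the number of leading entries of the source sequence equal to `2`. -/
def initialA (N : ℕ) (r : Fin N → Fin N → Bool) : ℕ :=
  Finset.sup ((Finset.range (N + 1)).filter fun j =>
    ∀ k < j, numSources N r ((peel N r)^[k] Set.univ) = 2) id

end

/-!
The zigzag monomials are products of `A = 𝖾𝗇` and `B = 𝗇𝖾`, which commute, followed by a
power of `𝗇`. Spanning: the relations give `𝗇·span{A, B} ⊆ span{A, B}·𝗇` and
`𝖾·span{A, B} ⊆ span{A, B}·𝖾`, so reading a word from left to right one can keep it in
`span{A, B}^s · 𝗇^k` (or `· 𝖾^k`), and an incoming `𝖾` (resp. `𝗇`) is absorbed by the tail,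
since `𝗇^(k+1)𝖾 = 𝗇^k B` lies in `span{A, B}·𝗇^k`. Independence: `𝒫` acts on `F[ℤ]` with `𝗇`
shifting up and `𝖾` shifting down with weight `1 + q^(-k)`, so that `A` and `B` act diagonally;
on a basis vector the zigzag monomials then produce a Vandermonde system in the pairwise distinct
ratios `(1 + q^(-k-1)) / (1 + q^(-k))`.
-/

open Submodule

section OrderedMonoid

variable {M : Type*} [Monoid M] [Preorder M] [MulLeftMono M] [MulRightMono M] {P Q V : M}

lemma pow_mul_le_mul_pow_of_mul_le (h : P * V ≤ V * P) : ∀ k : ℕ, P ^ k * V ≤ V * P ^ k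
  | 0 => by simp
  | k + 1 =>
    calc P ^ (k + 1) * V = P ^ k * (P * V) := by rw [pow_succ, mul_assoc]
      _ ≤ P ^ k * (V * P) := by gcongr
      _ = P ^ k * V * P := (mul_assoc _ _ _).symm
      _ ≤ V * P ^ k * P := mul_le_mul_left (pow_mul_le_mul_pow_of_mul_le h k) P
      _ = V * P ^ (k + 1) := by rw [mul_assoc, pow_succ]

lemma pow_mul_pow_succ_mul_le (hPV : P * V ≤ V * P) (hPQ : P * Q ≤ V) (s k : ℕ) :
    V ^ s * P ^ (k + 1) * Q ≤ V ^ (s + 1) * P ^ k :=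
  calc V ^ s * P ^ (k + 1) * Q = V ^ s * (P ^ k * (P * Q)) := by
        rw [pow_succ]; simp only [mul_assoc]
    _ ≤ V ^ s * (P ^ k * V) := by gcongr
    _ ≤ V ^ s * (V * P ^ k) := mul_le_mul_right (pow_mul_le_mul_pow_of_mul_le hPV k) _
    _ = V ^ (s + 1) * P ^ k := by rw [pow_succ, mul_assoc]

end OrderedMonoid

section Algebra

variable {R A : Type*} [CommSemiring R] [Semiring A] [Algebra R A]

lemma Submodule.span_pair_pow_le {x y : A} (hxy : Commute x y) (s : ℕ) :
    span R {x, y} ^ s ≤ span R {z | ∃ a b, a + b = s ∧ x ^ a * y ^ b = z} := by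
  induction s with
  | zero =>
    rw [pow_zero, one_eq_span]
    exact span_mono (by simp)
  | succ s ih =>
    rw [pow_succ]
    refine (mul_le_mul_left ih _).trans ?_
    rw [span_mul_span]
    apply span_mono
    rintro _ ⟨_, ⟨a, b, rfl, rfl⟩, z, hz, rfl⟩
    dsimp only
    rcases hz with rfl | rfl
    · refine ⟨a + 1, b, by omega, ?_⟩
      rw [mul_assoc, ← (hxy.pow_right b).eq, ← mul_assoc, pow_succ]
    · exact ⟨a, b + 1, by omega, by rw [mul_assoc, pow_succ]⟩

lemma Submodule.span_singleton_pow (x : A) (k : ℕ) : span R {x} ^ k = span R {x ^ k} := by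
  rw [span_pow, Set.singleton_pow]

end Algebra

lemma Module.End.pow_apply_of_apply_eq_smul {R M : Type*} [CommSemiring R] [AddCommMonoid M]
    [Module R M] {f : Module.End R M} {μ : R} {v : M} (h : f v = μ • v) (n : ℕ) :
    (f ^ n) v = μ ^ n • v := by
  induction n with
  | zero => simp
  | succ n ih => rw [pow_succ', Module.End.mul_apply, ih, map_smul, h, smul_smul, ← pow_succ]

lemma qq_ne_zero : qq ≠ 0 := RatFunc.X_ne_zero

lemma Pe_Pn_Pe_relation : (1 + qq) • (Pe * Pn * Pe) = qq • (Pe * Pe * Pn) + Pn * Pe * Pe := by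
  simpa [Pn, Pe] using RingQuot.mkAlgHom_rel F PathRel.mod1

lemma Pn_Pe_Pn_relation : (1 + qq) • (Pn * Pe * Pn) = qq • (Pe * Pn * Pn) + Pn * Pn * Pe := by
  simpa [Pn, Pe] using RingQuot.mkAlgHom_rel F PathRel.mod2

-- Multiply the first relation by `𝗇` on the right and the second by `𝖾` on the left:
-- the left sides agree.
lemma commute_Pe_mul_Pn_Pn_mul_Pe : Commute (Pe * Pn) (Pn * Pe) := by
  have h1 := congrArg (· * Pn) Pe_Pn_Pe_relation
  have h2 := congrArg (Pe * ·) Pn_Pe_Pn_relation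
  simp only [smul_mul_assoc, add_mul, mul_smul_comm, mul_add, mul_assoc] at h1 h2
  simpa only [Commute, SemiconjBy, mul_assoc] using (add_left_cancel (h1.symm.trans h2)).symm

lemma wordElem_append (u v : List Bool) : wordElem (u ++ v) = wordElem u * wordElem v := by
  simp [wordElem]

lemma wordElem_singleton_true : wordElem [true] = Pn := by simp [wordElem]

lemma wordElem_singleton_false : wordElem [false] = Pe := by simp [wordElem]

lemma Pmn_mul_le (a b c d : ℕ) : Pmn a b * Pmn c d ≤ Pmn (a + c) (b + d) := by
  rw [Pmn, Pmn, span_mul_span]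
  apply span_mono
  rintro _ ⟨_, ⟨u, rfl, rfl, rfl⟩, _, ⟨v, rfl, rfl, rfl⟩, rfl⟩
  exact ⟨u ++ v, List.count_append .., List.count_append .., (wordElem_append u v).symm⟩

lemma mul_mem_Pmn {a b c d : ℕ} {x y : PathAlg} (hx : x ∈ Pmn a b) (hy : y ∈ Pmn c d) :
    x * y ∈ Pmn (a + c) (b + d) :=
  Pmn_mul_le a b c d (mul_mem_mul hx hy)

lemma pow_mem_Pmn {a b : ℕ} {x : PathAlg} (hx : x ∈ Pmn a b) (k : ℕ) :
    x ^ k ∈ Pmn (k * a) (k * b) := by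
  induction k with
  | zero => exact subset_span ⟨[], by simp, by simp, by simp [wordElem]⟩
  | succ k ih => simpa only [pow_succ, add_mul, one_mul] using mul_mem_Pmn ih hx

lemma Pn_mem_Pmn : Pn ∈ Pmn 1 0 := subset_span ⟨[true], rfl, rfl, wordElem_singleton_true.symm⟩

lemma Pe_mem_Pmn : Pe ∈ Pmn 0 1 := subset_span ⟨[false], rfl, rfl, wordElem_singleton_false.symm⟩

lemma zigzag_mem_Pmn (a b d : ℕ) :
    (Pe * Pn) ^ a * (Pn * Pe) ^ b * Pn ^ d ∈ Pmn (a + b + d) (a + b) := by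
  have hA := mul_mem_Pmn Pe_mem_Pmn Pn_mem_Pmn
  have hB := mul_mem_Pmn Pn_mem_Pmn Pe_mem_Pmn
  simpa using
    mul_mem_Pmn (mul_mem_Pmn (pow_mem_Pmn hA a) (pow_mem_Pmn hB b)) (pow_mem_Pmn Pn_mem_Pmn d)

lemma span_zigzag_le_Pmn {m n : ℕ} (hnm : n ≤ m) :
    span F (Set.range fun a : Fin (n + 1) =>
      (Pe * Pn) ^ (a : ℕ) * (Pn * Pe) ^ (n - (a : ℕ)) * Pn ^ (m - n)) ≤ Pmn m n := by
  rw [span_le]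
  rintro _ ⟨a, rfl⟩
  have h := zigzag_mem_Pmn a (n - a) (m - n)
  rwa [show (a : ℕ) + (n - a) + (m - n) = m by omega, show (a : ℕ) + (n - a) = n by omega] at h

noncomputable def spanEN : Submodule F PathAlg := span F {Pe * Pn, Pn * Pe}

lemma Pe_mul_Pn_mem_spanEN : Pe * Pn ∈ spanEN := subset_span (by simp)

lemma Pn_mul_Pe_mem_spanEN : Pn * Pe ∈ spanEN := subset_span (by simp)

lemma span_Pn_mul_spanEN_le : span F {Pn} * spanEN ≤ spanEN * span F {Pn} := by
  rw [spanEN, span_mul_span, span_le, ← spanEN]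
  rintro _ ⟨_, rfl, z, hz, rfl⟩
  rw [SetLike.mem_coe]
  dsimp only
  have hmem : ∀ x ∈ spanEN, x * Pn ∈ spanEN * span F {Pn} :=
    fun x hx => mul_mem_mul hx (mem_span_singleton_self Pn)
  rcases hz with rfl | rfl
  · simpa only [mul_assoc] using hmem _ Pn_mul_Pe_mem_spanEN
  · have h : Pn * (Pn * Pe) = (1 + qq) • (Pn * Pe * Pn) - qq • (Pe * Pn * Pn) := by
      rw [eq_sub_iff_add_eq, Pn_Pe_Pn_relation, add_comm, mul_assoc Pn Pn Pe]
    rw [h]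
    exact sub_mem (smul_mem _ _ (hmem _ Pn_mul_Pe_mem_spanEN))
      (smul_mem _ _ (hmem _ Pe_mul_Pn_mem_spanEN))

lemma span_Pe_mul_spanEN_le : span F {Pe} * spanEN ≤ spanEN * span F {Pe} := by
  rw [spanEN, span_mul_span, span_le, ← spanEN]
  rintro _ ⟨_, rfl, z, hz, rfl⟩
  rw [SetLike.mem_coe]
  dsimp only
  have hmem : ∀ x ∈ spanEN, x * Pe ∈ spanEN * span F {Pe} :=
    fun x hx => mul_mem_mul hx (mem_span_singleton_self Pe)
  rcases hz with rfl | rfl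
  · have h : qq • (Pe * (Pe * Pn)) = (1 + qq) • (Pe * Pn * Pe) - Pn * Pe * Pe := by
      rw [eq_sub_iff_add_eq, Pe_Pn_Pe_relation, mul_assoc Pe Pe Pn]
    rw [← smul_mem_iff _ qq_ne_zero, h]
    exact sub_mem (smul_mem _ _ (hmem _ Pe_mul_Pn_mem_spanEN)) (hmem _ Pn_mul_Pe_mem_spanEN)
  · simpa only [mul_assoc] using hmem _ Pe_mul_Pn_mem_spanEN

lemma span_Pn_mul_span_Pe_le : span F {Pn} * span F {Pe} ≤ spanEN := by
  rw [span_mul_span, Set.singleton_mul_singleton, span_singleton_le_iff_mem]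
  exact Pn_mul_Pe_mem_spanEN

lemma span_Pe_mul_span_Pn_le : span F {Pe} * span F {Pn} ≤ spanEN := by
  rw [span_mul_span, Set.singleton_mul_singleton, span_singleton_le_iff_mem]
  exact Pe_mul_Pn_mem_spanEN

noncomputable def zigzagSpan (m n : ℕ) : Submodule F PathAlg :=
  spanEN ^ min m n * span F {Pn} ^ (m - n) * span F {Pe} ^ (n - m)

lemma zigzagSpan_add_left (n k : ℕ) : zigzagSpan (n + k) n = spanEN ^ n * span F {Pn} ^ k := by
  simp [zigzagSpan]

lemma zigzagSpan_add_right (m k : ℕ) : zigzagSpan m (m + k) = spanEN ^ m * span F {Pe} ^ k := by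
  simp [zigzagSpan]

lemma mul_Pn_mem_zigzagSpan {m n : ℕ} {x : PathAlg} (hx : x ∈ zigzagSpan m n) :
    x * Pn ∈ zigzagSpan (m + 1) n := by
  have hxPn := mul_mem_mul hx (mem_span_singleton_self Pn)
  rcases le_or_gt n m with h | h
  · obtain ⟨k, rfl⟩ := Nat.exists_eq_add_of_le h
    rw [zigzagSpan_add_left] at hxPn
    rwa [add_assoc, zigzagSpan_add_left, pow_succ, ← mul_assoc]
  · obtain ⟨j, rfl⟩ := Nat.exists_eq_add_of_lt h
    rw [add_assoc, zigzagSpan_add_right] at hxPn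
    rw [show m + j + 1 = m + 1 + j by omega, zigzagSpan_add_right]
    exact pow_mul_pow_succ_mul_le span_Pe_mul_spanEN_le span_Pe_mul_span_Pn_le m j hxPn

lemma mul_Pe_mem_zigzagSpan {m n : ℕ} {x : PathAlg} (hx : x ∈ zigzagSpan m n) :
    x * Pe ∈ zigzagSpan m (n + 1) := by
  have hxPe := mul_mem_mul hx (mem_span_singleton_self Pe)
  rcases le_or_gt m n with h | h
  · obtain ⟨k, rfl⟩ := Nat.exists_eq_add_of_le h
    rw [zigzagSpan_add_right] at hxPe
    rwa [add_assoc, zigzagSpan_add_right, pow_succ, ← mul_assoc]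
  · obtain ⟨j, rfl⟩ := Nat.exists_eq_add_of_lt h
    rw [add_assoc, zigzagSpan_add_left] at hxPe
    rw [show n + j + 1 = n + 1 + j by omega, zigzagSpan_add_left]
    exact pow_mul_pow_succ_mul_le span_Pn_mul_spanEN_le span_Pn_mul_span_Pe_le n j hxPe

lemma wordElem_mem_zigzagSpan (w : List Bool) :
    wordElem w ∈ zigzagSpan (w.count true) (w.count false) := by
  induction w using List.reverseRecOn with
  | nil => simpa [zigzagSpan, wordElem] using ⟨1, map_one _⟩
  | append_singleton w b ih =>
    rw [wordElem_append]
    cases b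
    · simpa [wordElem_singleton_false] using mul_Pe_mem_zigzagSpan ih
    · simpa [wordElem_singleton_true] using mul_Pn_mem_zigzagSpan ih

lemma spanEN_pow_mul_le_span_zigzag (s d : ℕ) :
    spanEN ^ s * span F {Pn} ^ d ≤
      span F (Set.range fun a : Fin (s + 1) =>
        (Pe * Pn) ^ (a : ℕ) * (Pn * Pe) ^ (s - (a : ℕ)) * Pn ^ d) := by
  rw [spanEN, span_singleton_pow]
  refine (mul_le_mul_left (span_pair_pow_le commute_Pe_mul_Pn_Pn_mul_Pe s) _).trans ?_
  rw [span_mul_span]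
  apply span_mono
  rintro _ ⟨_, ⟨a, b, rfl, rfl⟩, _, rfl, rfl⟩
  exact ⟨⟨a, by omega⟩, by simp⟩

lemma Pmn_le_span_zigzag {m n : ℕ} (hnm : n ≤ m) :
    Pmn m n ≤ span F (Set.range fun a : Fin (n + 1) =>
      (Pe * Pn) ^ (a : ℕ) * (Pn * Pe) ^ (n - (a : ℕ)) * Pn ^ (m - n)) := by
  rw [Pmn, span_le]
  rintro _ ⟨w, rfl, rfl, rfl⟩
  have hw := wordElem_mem_zigzagSpan w
  obtain ⟨k, hk⟩ := Nat.exists_eq_add_of_le hnm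
  rw [hk, zigzagSpan_add_left] at hw
  rw [hk, Nat.add_sub_cancel_left]
  exact spanEN_pow_mul_le_span_zigzag _ _ hw

lemma intDegree_qq_zpow (k : ℤ) : (qq ^ k).intDegree = k := by
  have hnat : ∀ n : ℕ, (qq ^ n).intDegree = n := by
    intro n
    induction n with
    | zero => simp
    | succ n ih =>
      rw [pow_succ, RatFunc.intDegree_mul (pow_ne_zero _ qq_ne_zero) qq_ne_zero, ih, qq,
        RatFunc.intDegree_X, Nat.cast_succ]
  obtain ⟨n, rfl | rfl⟩ := k.eq_nat_or_neg
  · rw [zpow_natCast, hnat]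
  · rw [zpow_neg, zpow_natCast, RatFunc.intDegree_inv, hnat]

lemma qq_zpow_injective : Function.Injective (qq ^ · : ℤ → F) := fun k l h => by
  simpa only [intDegree_qq_zpow] using congrArg RatFunc.intDegree h

-- Every `α + β q^(-k)` solves the recurrence `repCoeff_rec` imposed by the defining relations;
-- the constant term keeps the weights nonzero, the other one makes the ratios `repRatio` distinct.
noncomputable def repCoeff (k : ℤ) : F := 1 + qq ^ (-k)

lemma repCoeff_ne_zero (k : ℤ) : repCoeff k ≠ 0 := by
  intro h
  have hneg : qq ^ (-k) = -1 := eq_neg_of_add_eq_zero_right h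
  have hk : -k = 0 := by simpa [intDegree_qq_zpow] using congrArg RatFunc.intDegree hneg
  rw [hk, zpow_zero] at hneg
  exact two_ne_zero (one_add_one_eq_two.symm.trans (eq_neg_iff_add_eq_zero.mp hneg))

lemma repCoeff_rec (k : ℤ) : (1 + qq) * repCoeff k = qq * repCoeff (k + 1) + repCoeff (k - 1) := by
  have h1 : qq * qq ^ (-(k + 1)) = qq ^ (-k) := by
    rw [← zpow_one_add₀ qq_ne_zero]; ring_nf
  have h2 : qq ^ (-(k - 1)) = qq * qq ^ (-k) := by
    rw [← zpow_one_add₀ qq_ne_zero]; ring_nf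
  simp only [repCoeff]
  linear_combination -h1 - h2

noncomputable def repRatio (k : ℤ) : F := repCoeff (k + 1) / repCoeff k

lemma repRatio_injective : Function.Injective repRatio := by
  intro k l h
  rw [repRatio, repRatio, div_eq_div_iff (repCoeff_ne_zero k) (repCoeff_ne_zero l)] at h
  have hsplit : ∀ j : ℤ, qq ^ (-(j + 1)) = qq⁻¹ * qq ^ (-j) := fun j => by
    rw [← zpow_neg_one, ← zpow_add₀ qq_ne_zero]; ring_nf
  simp only [repCoeff, hsplit] at h
  have hfac : (qq ^ (-k) - qq ^ (-l)) * (qq⁻¹ - 1) = 0 := by linear_combination h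
  rcases mul_eq_zero.mp hfac with hkl | hq
  · simpa using qq_zpow_injective (sub_eq_zero.mp hkl)
  · have := qq_zpow_injective (a₁ := -1) (a₂ := 0) (by simpa [sub_eq_zero] using hq)
    omega

noncomputable def repN : Module.End F (ℤ →₀ F) := Finsupp.lmapDomain F F (· + 1)

noncomputable def repE : Module.End F (ℤ →₀ F) :=
  Finsupp.lsum F fun k => repCoeff k • Finsupp.lsingle (k - 1)

lemma repN_single (k : ℤ) (x : F) : repN (Finsupp.single k x) = Finsupp.single (k + 1) x := by
  rw [repN, Finsupp.lmapDomain_apply, Finsupp.mapDomain_single]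

lemma repE_single (k : ℤ) (x : F) :
    repE (Finsupp.single k x) = Finsupp.single (k - 1) (repCoeff k * x) := by
  simp [repE, Finsupp.smul_single]

lemma repE_mul_repN_mul_repE :
    (1 + qq) • (repE * repN * repE) = qq • (repE * repE * repN) + repN * repE * repE := by
  refine Finsupp.lhom_ext fun k x => ?_
  simp only [LinearMap.smul_apply, LinearMap.add_apply, Module.End.mul_apply, repN_single,
    repE_single, Finsupp.smul_single, smul_eq_mul, sub_add_cancel, add_sub_cancel_right,
    ← Finsupp.single_add]
  congr 1
  linear_combination (x * repCoeff k) * repCoeff_rec k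

lemma repN_mul_repE_mul_repN :
    (1 + qq) • (repN * repE * repN) = qq • (repE * repN * repN) + repN * repN * repE := by
  refine Finsupp.lhom_ext fun k x => ?_
  simp only [LinearMap.smul_apply, LinearMap.add_apply, Module.End.mul_apply, repN_single,
    repE_single, Finsupp.smul_single, smul_eq_mul, sub_add_cancel, add_sub_cancel_right,
    ← Finsupp.single_add]
  congr 1
  have h := repCoeff_rec (k + 1)
  rw [add_sub_cancel_right] at h
  linear_combination x * h

noncomputable def pathRep : PathAlg →ₐ[F] Module.End F (ℤ →₀ F) :=
  RingQuot.liftAlgHom F ⟨FreeAlgebra.lift F fun b => cond b repN repE, by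
    rintro _ _ ⟨⟩
    · simpa using repE_mul_repN_mul_repE
    · simpa using repN_mul_repE_mul_repN⟩

lemma pathRep_Pn : pathRep Pn = repN := by simp [pathRep, Pn]

lemma pathRep_Pe : pathRep Pe = repE := by simp [pathRep, Pe]

lemma pathRep_Pn_pow_single (d : ℕ) (k : ℤ) (x : F) :
    pathRep (Pn ^ d) (Finsupp.single k x) = Finsupp.single (k + d) x := by
  induction d with
  | zero => simp
  | succ d ih =>
    rw [pow_succ', map_mul, Module.End.mul_apply, ih, pathRep_Pn, repN_single]
    push_cast
    ring_nf

lemma pathRep_zigzag_single (a b d : ℕ) (j : ℤ) :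
    pathRep ((Pe * Pn) ^ a * (Pn * Pe) ^ b * Pn ^ d) (Finsupp.single j 1) =
      (repCoeff (j + d + 1) ^ a * repCoeff (j + d) ^ b) • Finsupp.single (j + d) 1 := by
  have hA : pathRep (Pe * Pn) (Finsupp.single (j + d) 1) =
      repCoeff (j + d + 1) • Finsupp.single (j + d) 1 := by
    simp [pathRep_Pn, pathRep_Pe, repN_single, repE_single, Finsupp.smul_single]
  have hB : pathRep (Pn * Pe) (Finsupp.single (j + d) 1) =
      repCoeff (j + d) • Finsupp.single (j + d) 1 := by
    simp [pathRep_Pn, pathRep_Pe, repN_single, repE_single, Finsupp.smul_single]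
  rw [map_mul, map_mul, map_pow, map_pow, Module.End.mul_apply, Module.End.mul_apply,
    pathRep_Pn_pow_single, Module.End.pow_apply_of_apply_eq_smul hB, map_smul,
    Module.End.pow_apply_of_apply_eq_smul hA, smul_smul, mul_comm]

theorem linearIndependent_zigzag (n d : ℕ) :
    LinearIndependent F
      (fun a : Fin (n + 1) => (Pe * Pn) ^ (a : ℕ) * (Pn * Pe) ^ (n - (a : ℕ)) * Pn ^ d) := by
  rw [Fintype.linearIndependent_iff]
  intro g hg
  have hvanish (K : ℤ) : ∑ a : Fin (n + 1), g a * repRatio K ^ (a : ℕ) = 0 := by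
    have h := congrArg (fun x => pathRep x (Finsupp.single (K - d) 1) K) hg
    simp only [map_sum, map_smul, map_zero, LinearMap.zero_apply, LinearMap.sum_apply,
      LinearMap.smul_apply, pathRep_zigzag_single, sub_add_cancel, Finsupp.coe_finsetSum,
      Finset.sum_apply, Finsupp.smul_apply, Finsupp.single_eq_same, smul_eq_mul, mul_one,
      Finsupp.coe_zero, Pi.zero_apply] at h
    have hterm (a : Fin (n + 1)) : g a * (repCoeff (K + 1) ^ (a : ℕ) * repCoeff K ^ (n - a)) =
        g a * repRatio K ^ (a : ℕ) * repCoeff K ^ n := by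
      rw [repRatio, div_pow, pow_sub₀ _ (repCoeff_ne_zero K) (Nat.lt_succ_iff.mp a.isLt)]
      field_simp
    simp only [hterm, ← Finset.sum_mul] at h
    exact (mul_eq_zero.mp h).resolve_right (pow_ne_zero _ (repCoeff_ne_zero K))
  have hinj : Function.Injective fun i : Fin (n + 1) => repRatio i :=
    repRatio_injective.comp (Nat.cast_injective.comp Fin.val_injective)
  exact congrFun (Matrix.eq_zero_of_forall_index_sum_mul_pow_eq_zero hinj fun i => hvanish i)

/-- The zigzag monomials form a basis of `𝒫_{m,n}`. -/
theorem stmt17 (m n : ℕ) (hmn : n ≤ m) :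
    LinearIndependent F
      (fun a : Fin (n + 1) =>
        (Pe * Pn) ^ (a : ℕ) * (Pn * Pe) ^ (n - (a : ℕ)) * Pn ^ (m - n)) ∧
    Submodule.span F
      (Set.range fun a : Fin (n + 1) =>
        (Pe * Pn) ^ (a : ℕ) * (Pn * Pe) ^ (n - (a : ℕ)) * Pn ^ (m - n)) =
      Pmn m n :=
  ⟨linearIndependent_zigzag n (m - n),
    le_antisymm (span_zigzag_le_Pmn hmn) (Pmn_le_span_zigzag hmn)⟩
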